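/- Let Ωᵢ = B̄(ωᵢ; rᵢ) (rᵢ ≥ 0) be closed balls with empty intersection in a Hilbert space X and let x̄ be the unique minimizer of D(x) = max_i d(x, Ωᵢ). Then x̄ lies in the convex hull of the centers of the active balls: x̄ ∈ conv{ωᵢ : i ∈ I(x̄)}, where I(x̄) = {i : d(x̄, Ωᵢ) = D(x̄)}. -/

import Mathlib

/-!
If `x̄` were outside the convex hull of the active centers, the nearest point of that
(compact, convex) hull would give a direction `v` with `⟪v, x̄ - ωᵢ⟫ > 0` for every active `i`.
Moving from `x̄` a little along `-v` strictly decreases the distance to every active center,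
hence to every active ball, since these lie at the positive distance `D x̄` (the balls have no
common point). The inactive balls stay at distance `< D x̄` by continuity, so `D` decreases:
a contradiction.
-/

open Metric Filter Topology
open scoped RealInnerProductSpace

section NormedSpace

variable {E : Type*} [NormedAddCommGroup E] [NormedSpace ℝ E]

theorem infDist_closedBall {x c : E} {r : ℝ} (hr : 0 ≤ r) :
    infDist x (closedBall c r) = max (dist x c - r) 0 := by
  rcases le_or_gt (dist x c) r with hin | hout
  · rw [infDist_zero_of_mem (mem_closedBall.2 hin), max_eq_right (by linarith)]
  rw [max_eq_left (by linarith)]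
  refine le_antisymm ?_ ((le_infDist (nonempty_closedBall.2 hr)).2 fun y hy => ?_)
  · have hd : 0 < dist x c := hr.trans_lt hout
    set z := AffineMap.lineMap c x (r / dist x c)
    have hz : z ∈ closedBall c r := by
      rw [mem_closedBall, dist_lineMap_left, dist_comm c x, Real.norm_of_nonneg (by positivity),
        div_mul_cancel₀ _ hd.ne']
    calc infDist x (closedBall c r) ≤ dist x z := infDist_le_dist_of_mem hz
      _ = dist x c - r := by
        rw [dist_comm x z, dist_lineMap_right, dist_comm c x,
          Real.norm_of_nonneg (sub_nonneg.2 ((div_le_one hd).2 hout.le)), sub_mul, one_mul,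
          div_mul_cancel₀ _ hd.ne']
  · linarith [dist_triangle x y c, mem_closedBall.1 hy]

theorem infDist_closedBall_lt_of_dist_lt {x y c : E} {r : ℝ} (hr : 0 ≤ r)
    (hx : 0 < infDist x (closedBall c r)) (h : dist y c < dist x c) :
    infDist y (closedBall c r) < infDist x (closedBall c r) := by
  rw [infDist_closedBall hr] at hx ⊢
  rw [infDist_closedBall hr]
  exact max_lt (lt_max_of_lt_left (sub_lt_sub_right h r)) hx

end NormedSpace

section InnerProductSpace

variable {E : Type*} [NormedAddCommGroup E] [InnerProductSpace ℝ E]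

theorem exists_forall_inner_sub_pos_of_notMem {K : Set E} (hc : IsComplete K)
    (hK : Convex ℝ K) {x : E} (hx : x ∉ K) : ∃ v : E, ∀ y ∈ K, 0 < ⟪v, x - y⟫ := by
  rcases K.eq_empty_or_nonempty with rfl | hne
  · exact ⟨0, by simp⟩
  obtain ⟨p, hp, hnearest⟩ := exists_norm_eq_iInf_of_complete_convex hne hc hK x
  have hobtuse := (norm_eq_iInf_iff_real_inner_le_zero hK hp).1 hnearest
  have hxp : x - p ≠ 0 := sub_ne_zero.2 fun h => hx (h ▸ hp)
  refine ⟨x - p, fun y hy => ?_⟩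
  calc 0 < ⟪x - p, x - p⟫ - ⟪x - p, y - p⟫ := by
        linarith [real_inner_self_pos.2 hxp, hobtuse y hy]
    _ = ⟪x - p, x - y⟫ := by rw [← inner_sub_right, sub_sub_sub_cancel_right]

theorem eventually_dist_sub_smul_lt {x c v : E} (h : 0 < ⟪v, x - c⟫) :
    ∀ᶠ t in 𝓝[>] (0 : ℝ), dist (x - t • v) c < dist x c := by
  have hsmall : ∀ᶠ t in 𝓝[>] (0 : ℝ), t * ‖v‖ ^ 2 < 2 * ⟪v, x - c⟫ :=
    nhdsWithin_le_nhds <| ((continuous_mul_const (‖v‖ ^ 2)).tendsto' 0 0 (zero_mul _))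
      |>.eventually_lt_const (by linarith)
  filter_upwards [self_mem_nhdsWithin, hsmall] with t (ht : 0 < t) hts
  rw [dist_eq_norm, dist_eq_norm, ← sq_lt_sq₀ (norm_nonneg _) (norm_nonneg _),
    sub_right_comm, norm_sub_sq_real, inner_smul_right, norm_smul, mul_pow, Real.norm_eq_abs,
    sq_abs, real_inner_comm]
  nlinarith

end InnerProductSpace

/-- The solution of the smallest intersecting ball problem generated by closed
balls in a Hilbert space lies in the convex hull of the centers of the active
balls. -/
theorem min_mem_convexHull_centers
    {X : Type*} [NormedAddCommGroup X] [InnerProductSpace ℝ X]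
    (n : ℕ) (hn : 1 < n) (ω : Fin n → X) (r : Fin n → ℝ) (hr : ∀ i, 0 ≤ r i)
    (hint : (⋂ i, Metric.closedBall (ω i) (r i)) = ∅)
    (D : X → ℝ)
    (hD : D = fun x => Finset.univ.sup' (Finset.univ_nonempty_iff.2 ⟨⟨0, by omega⟩⟩)
      fun i => Metric.infDist x (Metric.closedBall (ω i) (r i)))
    (xbar : X) (hmin : IsMinOn D Set.univ xbar) :
    xbar ∈ convexHull ℝ
      (ω '' {i | Metric.infDist xbar (Metric.closedBall (ω i) (r i)) = D xbar}) := by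
  have hD_ge (i : Fin n) (x : X) : infDist x (closedBall (ω i) (r i)) ≤ D x :=
    hD ▸ Finset.le_sup' (fun j => infDist x (closedBall (ω j) (r j))) (Finset.mem_univ i)
  have hDpos : 0 < D xbar := by
    by_contra! hle
    have hmem : xbar ∈ ⋂ i, closedBall (ω i) (r i) := Set.mem_iInter.2 fun i =>
      (isClosed_closedBall.mem_iff_infDist_zero (nonempty_closedBall.2 (hr i))).2
        (le_antisymm ((hD_ge i xbar).trans hle) infDist_nonneg)
    simp [hint] at hmem
  by_contra hx
  obtain ⟨v, hv⟩ := exists_forall_inner_sub_pos_of_notMem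
    (((Set.toFinite _).image ω).isCompact_convexHull (𝕜 := ℝ)).isComplete (convex_convexHull ℝ _) hx
  have hdescent (i : Fin n) :
      ∀ᶠ t in 𝓝[>] (0 : ℝ), infDist (xbar - t • v) (closedBall (ω i) (r i)) < D xbar := by
    by_cases hi : infDist xbar (closedBall (ω i) (r i)) = D xbar
    · filter_upwards [eventually_dist_sub_smul_lt (hv _ (subset_convexHull ℝ _ ⟨i, hi, rfl⟩))]
        with t ht
      exact hi ▸ infDist_closedBall_lt_of_dist_lt (hr i) (hi ▸ hDpos) ht
    · have hcont : Continuous fun t : ℝ => infDist (xbar - t • v) (closedBall (ω i) (r i)) :=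
        continuous_infDist_pt _ |>.comp (by fun_prop)
      exact nhdsWithin_le_nhds <| (hcont.tendsto' 0 _ (by simp)).eventually_lt_const
        ((hD_ge i xbar).lt_of_ne hi)
  obtain ⟨t, ht⟩ := (eventually_all.2 hdescent).exists
  refine (show D xbar ≤ D (xbar - t • v) from hmin (Set.mem_univ _)).not_gt ?_
  conv_lhs => rw [hD]
  exact (Finset.sup'_lt_iff _).2 fun i _ => ht i
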